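/- Let 𝒞, 𝒞', 𝒟 be subcategories of 𝓑 satisfying condition (RCP) with 𝒟 ⊆ 𝒞 ∩ 𝒞'. Then CoCone(𝒟,𝒞) = CoCone(𝒞',𝒟) if and only if 𝒞' = CoCone(𝒟,𝒞) ∩ 𝒟^⊥¹. -/

import Mathlib

open CategoryTheory Category Limits ZeroObject

universe v u

namespace CotorsionPaper

variable {B : Type u} [Category.{v} B] [Abelian B]

/-- `f, g` form a short exact sequence `0 → X → Y → Z → 0`. -/
def IsSES {X Y Z : B} (f : X ⟶ Y) (g : Y ⟶ Z) : Prop :=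
  ∃ w : f ≫ g = 0, (ShortComplex.mk f g w).ShortExact

/-- `Ext¹(X, Y) = 0`: every short exact sequence `0 → Y → E → X → 0` splits. -/
def Ext1Zero (X Y : B) : Prop :=
  ∀ ⦃E : B⦄ (i : Y ⟶ E) (p : E ⟶ X), IsSES i p → ∃ s : X ⟶ E, s ≫ p = 𝟙 X

/-- `Ext²(X, Y) = 0`, via dimension shifting: `Ext¹(K, Y) = 0` for any syzygy `K` of `X`. -/
def Ext2Zero (X Y : B) : Prop :=
  ∀ ⦃K P : B⦄ (i : K ⟶ P) (p : P ⟶ X), Projective P → IsSES i p → Ext1Zero K Y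

/-- A (strictly) full additive subcategory: closed under isomorphisms,
contains a zero object and is closed under finite direct sums. -/
structure AddSubcat (S : Set B) : Prop where
  zero_mem : (0 : B) ∈ S
  iso_closed : ∀ ⦃X Y : B⦄, (X ≅ Y) → X ∈ S → Y ∈ S
  sum_closed : ∀ ⦃X Y : B⦄, X ∈ S → Y ∈ S → (X ⊞ Y) ∈ S

/-- `S` is closed under direct summands (retracts). -/
def ClosedUnderSummands (S : Set B) : Prop :=
  ∀ ⦃X Y : B⦄ (r : X ⟶ Y) (s : Y ⟶ X), s ≫ r = 𝟙 Y → X ∈ S → Y ∈ S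

/-- `S` is rigid: `Ext¹(X, Y) = 0` for all `X, Y ∈ S`. -/
def Rigid (S : Set B) : Prop :=
  ∀ ⦃X⦄, X ∈ S → ∀ ⦃Y⦄, Y ∈ S → Ext1Zero X Y

/-- `S^⊥¹`. -/
def rightPerp (S : Set B) : Set B := {Y | ∀ ⦃X⦄, X ∈ S → Ext1Zero X Y}

/-- `^⊥¹S`. -/
def leftPerp (S : Set B) : Set B := {X | ∀ ⦃Y⦄, Y ∈ S → Ext1Zero X Y}

/-- `f : X ⟶ A` is a right `S`-approximation of `A`. -/
def IsRightApprox (S : Set B) {X A : B} (f : X ⟶ A) : Prop :=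
  X ∈ S ∧ ∀ ⦃X' : B⦄, X' ∈ S → ∀ g : X' ⟶ A, ∃ h : X' ⟶ X, h ≫ f = g

def ContravariantlyFinite (S : Set B) : Prop :=
  ∀ A : B, ∃ (X : B) (f : X ⟶ A), IsRightApprox S f

/-- `f : A ⟶ X` is a left `S`-approximation of `A`. -/
def IsLeftApprox (S : Set B) {A X : B} (f : A ⟶ X) : Prop :=
  X ∈ S ∧ ∀ ⦃X' : B⦄, X' ∈ S → ∀ g : A ⟶ X', ∃ h : X ⟶ X', f ≫ h = g

def CovariantlyFinite (S : Set B) : Prop :=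
  ∀ A : B, ∃ (X : B) (f : A ⟶ X), IsLeftApprox S f

/-- `(U, V)` is a cotorsion pair. -/
structure CotorsionPair (U V : Set B) : Prop where
  summands_left : ClosedUnderSummands U
  summands_right : ClosedUnderSummands V
  ext : ∀ ⦃X⦄, X ∈ U → ∀ ⦃Y⦄, Y ∈ V → Ext1Zero X Y
  resol : ∀ X : B, ∃ (VX UX : B) (i : VX ⟶ UX) (p : UX ⟶ X),
    VX ∈ V ∧ UX ∈ U ∧ IsSES i p
  coresol : ∀ X : B, ∃ (VX UX : B) (i : X ⟶ VX) (p : VX ⟶ UX),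
    VX ∈ V ∧ UX ∈ U ∧ IsSES i p

/-- `CoCone(S, T)`. -/
def CoCone (S T : Set B) : Set B :=
  {X | ∃ (B' B'' : B) (i : X ⟶ B') (p : B' ⟶ B''), B' ∈ S ∧ B'' ∈ T ∧ IsSES i p}

/-- `Cone(S, T)`. -/
def Cone (S T : Set B) : Set B :=
  {X | ∃ (B' B'' : B) (i : B' ⟶ B'') (p : B'' ⟶ X), B' ∈ S ∧ B'' ∈ T ∧ IsSES i p}

/-- The subcategory `𝒫` of projective objects. -/
def projSet : Set B := {P | Projective P}

/-- The subcategory `ℐ` of injective objects. -/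
def injSet : Set B := {I | Injective I}

/-- `Ω𝒞`, the (first) syzygy of `𝒞`. -/
def Syz (C : Set B) : Set B := CoCone projSet C

/-- Condition (RCP): `𝒫 ⊆ 𝒞`, `𝒞` rigid, contravariantly finite,
closed under direct summands (and a full additive subcategory). -/
structure RCP (C : Set B) : Prop where
  add : AddSubcat C
  proj_mem : ∀ ⦃P : B⦄, Projective P → P ∈ C
  rigid : Rigid C
  contra : ContravariantlyFinite C
  summands : ClosedUnderSummands C

/-- `f` factors through an object of `S`. -/
def FactorsThru (S : Set B) {X Y : B} (f : X ⟶ Y) : Prop :=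
  ∃ (Z : B) (g : X ⟶ Z) (h : Z ⟶ Y), Z ∈ S ∧ g ≫ h = f

instance fullSubcategoryCategorySet (H : Set B) :
    Category.{v} (ObjectProperty.FullSubcategory (H : ObjectProperty B)) :=
  ObjectProperty.FullSubcategory.category _

/-- The ideal of morphisms of the full subcategory on `H` factoring through an object of `S`. -/
def idealRel (H S : Set B) : HomRel (ObjectProperty.FullSubcategory (H : ObjectProperty B)) :=
  fun X Y f g => FactorsThru S (show X.obj ⟶ Y.obj from f.hom - g.hom)

/-- The ideal quotient `H/S`. -/
abbrev HeartCat (H S : Set B) := CategoryTheory.Quotient (idealRel H S)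

/-- The quotient functor `H → H/S`. -/
abbrev heartQ (H S : Set B) : ObjectProperty.FullSubcategory (H : ObjectProperty B) ⥤ HeartCat H S :=
  CategoryTheory.Quotient.functor _

/-- The zero morphism in the ideal quotient `H/S`. -/
def heartZero (H S : Set B) (X Y : HeartCat H S) : X ⟶ Y :=
  (heartQ H S).map (⟨0⟩ : X.as ⟶ Y.as)

/-- `κ` is a kernel of `φ` in the ideal quotient `H/S`. -/
structure IsKernelArrow {H S : Set B} {K X Y : HeartCat H S}
    (κ : K ⟶ X) (φ : X ⟶ Y) : Prop where
  w : κ ≫ φ = heartZero H S K Y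
  lift : ∀ ⦃T : HeartCat H S⦄ (t : T ⟶ X), t ≫ φ = heartZero H S T Y →
    ∃! u : T ⟶ K, u ≫ κ = t

/-- `π` is a cokernel of `φ` in the ideal quotient `H/S`. -/
structure IsCokernelArrow {H S : Set B} {X Y Q : HeartCat H S}
    (φ : X ⟶ Y) (π : Y ⟶ Q) : Prop where
  w : φ ≫ π = heartZero H S X Q
  desc : ∀ ⦃T : HeartCat H S⦄ (t : Y ⟶ T), φ ≫ t = heartZero H S X T →
    ∃! u : Q ⟶ T, π ≫ u = t

/-- The class of epimorphisms in `H/S` whose kernel object lies in `A`. -/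
def epiClassWithKernelIn (H S A : Set B) : MorphismProperty (HeartCat H S) :=
  fun X Y φ => Epi φ ∧ ∃ (K : HeartCat H S) (κ : K ⟶ X),
    K.as.obj ∈ A ∧ IsKernelArrow κ φ

/-- The class of monomorphisms in `H/S` whose cokernel object lies in `A`. -/
def monoClassWithCokernelIn (H S A : Set B) : MorphismProperty (HeartCat H S) :=
  fun X Y φ => Mono φ ∧ ∃ (Q : HeartCat H S) (π : Y ⟶ Q),
    Q.as.obj ∈ A ∧ IsCokernelArrow φ π

/-- The diagram `(⋄)` associated with a morphism `f : Y ⟶ X`. -/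
structure DiamondDiagram {Y X : B} (f : Y ⟶ X) {OmX PX Z₁ IY SgY Z₂ : B}
    (q : OmX ⟶ PX) (p : PX ⟶ X) (j : OmX ⟶ Z₁) (g : Z₁ ⟶ Y)
    (i : Y ⟶ IY) (c : IY ⟶ SgY) (h : X ⟶ Z₂) (e : Z₂ ⟶ SgY)
    (u : Z₁ ⟶ PX) (v : IY ⟶ Z₂) : Prop where
  projPX : Projective PX
  injIY : Injective IY
  ses_proj : IsSES q p
  ses_pullback : IsSES j g
  ses_inj : IsSES i c
  ses_pushout : IsSES h e
  comm₁ : j ≫ u = q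
  comm₂ : u ≫ p = g ≫ f
  comm₃ : f ≫ h = i ≫ v
  comm₄ : v ≫ e = c

/-- The class of morphisms `f : Y ⟶ X` admitting a diagram `(⋄)` with
`Z₁ ∈ ZCond` and `h` factoring through an object of `HCond`. -/
def Rclass (ZCond HCond : Set B) : MorphismProperty B :=
  fun Y X f => ∃ (OmX PX Z₁ IY SgY Z₂ : B) (q : OmX ⟶ PX) (p : PX ⟶ X)
    (j : OmX ⟶ Z₁) (g : Z₁ ⟶ Y) (i : Y ⟶ IY) (c : IY ⟶ SgY)
    (h : X ⟶ Z₂) (e : Z₂ ⟶ SgY) (u : Z₁ ⟶ PX) (v : IY ⟶ Z₂),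
    DiamondDiagram f q p j g i c h e u v ∧ Z₁ ∈ ZCond ∧ FactorsThru HCond h

/-- The class of morphisms `f : Y ⟶ X` admitting a diagram `(⋄)` with
`g` factoring through an object of `GCond` and `h` through an object of `HCond`. -/
def RtildeClass (GCond HCond : Set B) : MorphismProperty B :=
  fun Y X f => ∃ (OmX PX Z₁ IY SgY Z₂ : B) (q : OmX ⟶ PX) (p : PX ⟶ X)
    (j : OmX ⟶ Z₁) (g : Z₁ ⟶ Y) (i : Y ⟶ IY) (c : IY ⟶ SgY)
    (h : X ⟶ Z₂) (e : Z₂ ⟶ SgY) (u : Z₁ ⟶ PX) (v : IY ⟶ Z₂),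
    DiamondDiagram f q p j g i c h e u v ∧ FactorsThru GCond g ∧ FactorsThru HCond h

/-- The objects of the heart `ℋ` of a cotorsion pair `(U, V)`. -/
def HeartObjects (U V : Set B) : Set B :=
  {X | (∃ (VX UX : B) (i : VX ⟶ UX) (p : UX ⟶ X),
          IsSES i p ∧ VX ∈ V ∧ UX ∈ U ∩ V) ∧
       (∃ (VX UX : B) (i : X ⟶ VX) (p : VX ⟶ UX),
          IsSES i p ∧ VX ∈ U ∩ V ∧ UX ∈ U)}

/-!
If `CoCone(𝒟,𝒞) = CoCone(𝒞',𝒟)`, objects of `𝒞'` lie in `CoCone(𝒞',𝒟)` trivially and in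
`𝒟^⊥¹` by rigidity, while for `Y` in `CoCone(𝒞',𝒟) ∩ 𝒟^⊥¹` the defining sequence
`0 → Y → C' → D → 0` splits, so `Y` is a summand of `C' ∈ 𝒞'`.

Conversely let `𝒞' = CoCone(𝒟,𝒞) ∩ 𝒟^⊥¹`. Given `0 → X → D₀ → C₀ → 0`, pull it back along a
right `𝒟`-approximation `U → C₀` (an epimorphism, as `𝒫 ⊆ 𝒟`). The pullback `V` is an extension
of `D₀` by the kernel of the approximation, which lies in `𝒟^⊥¹` by Wakamatsu's lemma, and
`0 → V → D₀ ⊞ U → C₀ → 0` puts `V` in `CoCone(𝒟,𝒞)`; so `0 → X → V → U → 0` shows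
`X ∈ CoCone(𝒞',𝒟)`. Given instead `0 → X → Y → D₀ → 0` and `0 → Y → D₁ → C₁ → 0`, the pushout
`P` of `D₀ ← Y → D₁` is an extension of `C₁` by `D₀`, hence split and in `𝒞`, and
`0 → X → D₁ → P → 0` shows `X ∈ CoCone(𝒟,𝒞)`.
-/

open Preadditive

namespace IsSES

variable {X A Q : B} {f : X ⟶ A} {g : A ⟶ Q}

lemma w (h : IsSES f g) : f ≫ g = 0 := h.1

lemma mono (h : IsSES f g) : Mono f := h.2.mono_f

lemma epi (h : IsSES f g) : Epi g := h.2.epi_g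

lemma of_isLimit (w : f ≫ g = 0) [Mono f] [Epi g] (h : IsLimit (KernelFork.ofι f w)) :
    IsSES f g :=
  ⟨w, .mk' ((ShortComplex.mk f g w).exact_of_f_is_kernel h) inferInstance inferInstance⟩

lemma of_isColimit (w : f ≫ g = 0) [Mono f] [Epi g]
    (h : IsColimit (CokernelCofork.ofπ g w)) : IsSES f g :=
  ⟨w, .mk' ((ShortComplex.mk f g w).exact_of_g_is_cokernel h) inferInstance inferInstance⟩

lemma exists_retraction (h : IsSES f g) {s : Q ⟶ A} (hs : s ≫ g = 𝟙 Q) :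
    ∃ r : A ⟶ X, f ≫ r = 𝟙 X :=
  ⟨_, (ShortComplex.Splitting.ofExactOfSection _ h.2.exact s hs h.2.mono_f).f_r⟩

lemma pullback (h : IsSES f g) {U V : B} {u : U ⟶ Q} {p₁ : V ⟶ A} {p₂ : V ⟶ U}
    (sq : IsPullback p₁ p₂ g u) : ∃ x : X ⟶ V, x ≫ p₁ = f ∧ IsSES x p₂ := by
  have := h.mono
  have := h.epi
  have hw : f ≫ g = (0 : X ⟶ U) ≫ u := by rw [h.w, zero_comp]
  have hx₁ : sq.lift f 0 hw ≫ p₁ = f := sq.lift_fst ..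
  have hx₂ : sq.lift f 0 hw ≫ p₂ = 0 := sq.lift_snd ..
  have : Mono (sq.lift f 0 hw) := mono_of_mono_fac hx₁
  have : Epi p₂ := Abelian.epi_snd_of_isLimit _ _ sq.isLimit
  refine ⟨_, hx₁, of_isLimit hx₂ (KernelFork.IsLimit.ofι' _ hx₂ fun {T} t ht => ?_)⟩
  obtain ⟨l, hl⟩ := KernelFork.IsLimit.lift' h.2.fIsKernel (t ≫ p₁)
    (by rw [assoc, sq.w, reassoc_of% ht, zero_comp])
  exact ⟨l, sq.hom_ext (by simpa [hx₁] using hl) (by simp [hx₂, ht])⟩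

lemma pushout (h : IsSES f g) {Y P : B} {u : X ⟶ Y} {i₁ : A ⟶ P} {i₂ : Y ⟶ P}
    (sq : IsPushout f u i₁ i₂) : ∃ e : P ⟶ Q, i₁ ≫ e = g ∧ IsSES i₂ e := by
  have := h.mono
  have := h.epi
  have hw : f ≫ g = u ≫ (0 : Y ⟶ Q) := by rw [h.w, comp_zero]
  have he₁ : i₁ ≫ sq.desc g 0 hw = g := sq.inl_desc ..
  have he₂ : i₂ ≫ sq.desc g 0 hw = 0 := sq.inr_desc ..
  have : Epi (sq.desc g 0 hw) := epi_of_epi_fac he₁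
  have : Mono i₂ := Abelian.mono_inr_of_isColimit _ _ sq.isColimit
  refine ⟨_, he₁, of_isColimit he₂ (CokernelCofork.IsColimit.ofπ' _ he₂ fun {T} t ht => ?_)⟩
  obtain ⟨l, hl⟩ := CokernelCofork.IsColimit.desc' h.2.gIsCokernel (i₁ ≫ t)
    (by rw [← assoc, sq.w, assoc, ht, comp_zero])
  exact ⟨l, sq.hom_ext (by simpa [reassoc_of% he₁] using hl) (by simp [reassoc_of% he₂, ht])⟩

lemma comp_pushout {Y Z P : B} {x : X ⟶ Y} {a : Y ⟶ Q} (h : IsSES x a) {b : Y ⟶ Z} [Mono b]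
    {i₁ : Q ⟶ P} {i₂ : Z ⟶ P} (sq : IsPushout a b i₁ i₂) : IsSES (x ≫ b) i₂ := by
  have := h.mono
  have := h.epi
  have : Epi i₂ := sq.epi_inr_of_epi
  have w : (x ≫ b) ≫ i₂ = 0 := by rw [assoc, ← sq.w, reassoc_of% h.w, zero_comp]
  refine of_isColimit w (CokernelCofork.IsColimit.ofπ' _ w fun {T} t ht => ?_)
  obtain ⟨s, hs⟩ := CokernelCofork.IsColimit.desc' h.2.gIsCokernel (b ≫ t) (by simpa using ht)
  exact ⟨sq.desc s t hs, sq.inr_desc ..⟩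

end IsSES

lemma isSES_id_zero (X : B) : IsSES (𝟙 X) (0 : X ⟶ 0) :=
  have w : 𝟙 X ≫ (0 : X ⟶ 0) = 0 := comp_zero
  have : Epi (0 : X ⟶ 0) := ⟨fun _ _ _ => (isZero_zero B).eq_of_src _ _⟩
  .of_isLimit w (KernelFork.IsLimit.ofι' _ w fun t _ => ⟨t, comp_id t⟩)

lemma isSES_kernel_ι {U Q : B} (f : U ⟶ Q) [Epi f] : IsSES (kernel.ι f) f :=
  .of_isLimit (kernel.condition f) (kernelIsKernel f)

lemma isSES_biprod_of_isPullback {X₁ X₂ X₃ X₄ : B} {fst : X₁ ⟶ X₂} {snd : X₁ ⟶ X₃}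
    {f : X₂ ⟶ X₄} {g : X₃ ⟶ X₄} (sq : IsPullback fst snd f g) [Epi f] :
    IsSES (biprod.lift fst snd) (biprod.desc f (-g)) := by
  have : Epi (biprod.desc f (-g)) := epi_of_epi_fac (biprod.inl_desc f (-g))
  exact ⟨sq.shortComplex'.zero, .mk' sq.exact_shortComplex' sq.mono_shortComplex'_f this⟩

lemma AddSubcat.mem_of_isSES {S : Set B} (hS : AddSubcat S) {X A Q : B} {f : X ⟶ A}
    {g : A ⟶ Q} (h : IsSES f g) {s : Q ⟶ A} (hs : s ≫ g = 𝟙 Q) (hX : X ∈ S) (hQ : Q ∈ S) :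
    A ∈ S :=
  hS.iso_closed
    (ShortComplex.Splitting.ofExactOfSection _ h.2.exact s hs h.2.mono_f).isoBinaryBiproduct.symm
    (hS.sum_closed hX hQ)

lemma Ext1Zero.of_isSES {T K V Q : B} {k : K ⟶ V} {q : V ⟶ Q} (hkq : IsSES k q)
    (hK : Ext1Zero T K) (hQ : Ext1Zero T Q) : Ext1Zero T V := by
  intro E a b hab
  -- Push `0 → V → E → T → 0` out along `q` and split it; the pullback of `E → pushout q a`
  -- along that splitting is an extension of `T` by `K`, and its splitting lifts to `E`.
  have := hab.mono
  have sq := IsPushout.of_hasPushout q a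
  obtain ⟨e, he, hQE⟩ := hab.pushout sq.flip
  obtain ⟨s, hs⟩ := hQ _ _ hQE
  obtain ⟨_, -, hKW⟩ := (hkq.comp_pushout sq).pullback (IsPullback.of_hasPullback _ s)
  obtain ⟨t, ht⟩ := hK _ _ hKW
  refine ⟨t ≫ pullback.fst _ s, ?_⟩
  rw [← he, assoc, pullback.condition_assoc, reassoc_of% ht, hs]

lemma kernel_mem_rightPerp_of_isRightApprox {D : Set B} (hD : Rigid D) {U Q : B}
    {f : U ⟶ Q} [Epi f] (hf : IsRightApprox D f) : kernel f ∈ rightPerp D := by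
  intro D' hD' E e₁ e₂ hE
  -- Pushed out along `kernel.ι f`, the extension splits by rigidity; correcting that
  -- splitting by a lift through the approximation `f` makes it factor through `E`.
  have sq := IsPushout.of_hasPushout (kernel.ι f) e₁
  obtain ⟨d, hd₁, hd⟩ := hE.pushout sq.flip
  obtain ⟨c, hc₁, hc⟩ := (isSES_kernel_ι f).pushout sq
  obtain ⟨s, hs⟩ := hD hD' hf.1 _ _ hd
  obtain ⟨h, hh⟩ := hf.2 hD' (s ≫ c)
  obtain ⟨τ, hτ⟩ := KernelFork.IsLimit.lift' hc.2.fIsKernel (s - h ≫ pushout.inl _ _)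
    (by rw [sub_comp, assoc, hc₁, hh, sub_self])
  have hτ' : τ ≫ pushout.inr _ _ = s - h ≫ pushout.inl _ _ := hτ
  refine ⟨τ, ?_⟩
  rw [← hd₁, reassoc_of% hτ', sub_comp, assoc, hd.w, comp_zero, sub_zero, hs]

omit [Abelian B] in
lemma IsRightApprox.epi [EnoughProjectives B] {S : Set B}
    (hP : ∀ ⦃P : B⦄, Projective P → P ∈ S) {X A : B} {f : X ⟶ A} (hf : IsRightApprox S f) :
    Epi f := by
  obtain ⟨h, hh⟩ := hf.2 (hP (Projective.projective_over A)) (Projective.π A)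
  exact epi_of_epi_fac hh

lemma subset_coCone {S T : Set B} (hT : (0 : B) ∈ T) : S ⊆ CoCone S T :=
  fun Y hY => ⟨Y, 0, 𝟙 Y, 0, hY, hT, isSES_id_zero Y⟩

lemma coCone_inter_rightPerp_subset {S T : Set B} (hS : ClosedUnderSummands S) :
    CoCone S T ∩ rightPerp T ⊆ S := by
  rintro Y ⟨⟨Z, T₀, i, p, hZ, hT₀, hip⟩, hY⟩
  obtain ⟨s, hs⟩ := hY hT₀ i p hip
  obtain ⟨r, hr⟩ := hip.exists_retraction hs
  exact hS r i hr hZ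

lemma coCone_subset_coCone_of_subset {S C D : Set B} (hC : AddSubcat C) (hCrigid : Rigid C)
    (hDC : D ⊆ C) (hS : S ⊆ CoCone D C) : CoCone S D ⊆ CoCone D C := by
  rintro X ⟨Y, D₀, x, a, hY, hD₀, hxa⟩
  obtain ⟨D₁, C₁, b, c, hD₁, hC₁, hbc⟩ := hS hY
  have := hbc.mono
  have sq := IsPushout.of_hasPushout a b
  obtain ⟨e, -, he⟩ := hbc.pushout sq.flip
  obtain ⟨s, hs⟩ := hCrigid hC₁ (hDC hD₀) _ _ he
  exact ⟨D₁, pushout a b, x ≫ b, pushout.inr a b, hD₁,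
    hC.mem_of_isSES he hs (hDC hD₀) hC₁, hxa.comp_pushout sq⟩

lemma coCone_subset_coCone_inter_rightPerp [EnoughProjectives B] {C D : Set B} (hD : RCP D) :
    CoCone D C ⊆ CoCone (CoCone D C ∩ rightPerp D) D := by
  rintro X ⟨D₀, C₀, x, g, hD₀, hC₀, hxg⟩
  obtain ⟨U, f, hf⟩ := hD.contra C₀
  have := hf.epi hD.proj_mem
  have := hxg.epi
  have sq := IsPullback.of_hasPullback g f
  obtain ⟨x', -, hx'⟩ := hxg.pullback sq
  obtain ⟨_, -, hκ⟩ := (isSES_kernel_ι f).pullback sq.flip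
  have hperp : pullback g f ∈ rightPerp D := fun D' hD' =>
    Ext1Zero.of_isSES hκ (kernel_mem_rightPerp_of_isRightApprox hD.rigid hf hD')
      (hD.rigid hD' hD₀)
  have hcocone : pullback g f ∈ CoCone D C :=
    ⟨_, _, _, _, hD.add.sum_closed hD₀ hf.1, hC₀, isSES_biprod_of_isPullback sq⟩
  exact ⟨pullback g f, U, x', pullback.snd g f, ⟨hcocone, hperp⟩, hf.1, hx'⟩

theorem statement_15_general {B : Type u} [Category.{v} B] [Abelian B]
    [EnoughProjectives B]
    (C C' D : Set B) (hC : RCP C) (hC' : RCP C') (hD : RCP D)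
    (hDCC' : D ⊆ C ∩ C') :
    CoCone D C = CoCone C' D ↔ C' = CoCone D C ∩ rightPerp D := by
  constructor
  · intro hEq
    have hcocone : C' ⊆ CoCone C' D := subset_coCone hD.add.zero_mem
    have hperp : C' ⊆ rightPerp D := fun Y hY D' hD' => hC'.rigid (hDCC' hD').2 hY
    rw [hEq]
    exact subset_antisymm (Set.subset_inter hcocone hperp)
      (coCone_inter_rightPerp_subset hC'.summands)
  · rintro rfl
    exact subset_antisymm (coCone_subset_coCone_inter_rightPerp hD)
      (coCone_subset_coCone_of_subset hC.add hC.rigid (fun _ h => (hDCC' h).1)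
        Set.inter_subset_left)

/-- `CoCone(𝒟,𝒞) = CoCone(𝒞',𝒟)` iff `𝒞' = CoCone(𝒟,𝒞) ∩ 𝒟^⊥¹`. -/
theorem statement_15 {B : Type u} [Category.{v} B] [Abelian B]
    [EnoughProjectives B] [EnoughInjectives B]
    (C C' D : Set B) (hC : RCP C) (hC' : RCP C') (hD : RCP D)
    (hDCC' : D ⊆ C ∩ C') :
    CoCone D C = CoCone C' D ↔ C' = CoCone D C ∩ rightPerp D :=
  statement_15_general C C' D hC hC' hD hDCC'

end CotorsionPaper
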